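/- arXiv:1103.2487 — 2 statements merged into one kernel-verified Lean document; each statement's English description precedes it below -/
import Mathlib

section
/- The thresholds of a canonically represented disjunctive hierarchical game are unique: if two disjunctive hierarchical games on the same partition P = P_1∪...∪P_m (|P_i| = n_i), with threshold sequences k_1<...<k_m and k'_1<...<k'_m, both satisfy k_1 ≤ n_1, k_i < k_{i-1}+n_i for 1<i<m, k_m < k_{m-1}+n_m (and likewise for k'), and they have the same winning coalitions, then k_i = k'_i for all i. -/
/-- Cumulative union `P_1 ∪ ... ∪ P_i` of the first `i` (1-indexed) levels. -/
def cumUnion {α : Type*} [DecidableEq α] (P : ℕ → Finset α) (i : ℕ) : Finset α :=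
  (Finset.Icc 1 i).biUnion P

/-- Winning predicate of the disjunctive hierarchical game. -/
def disjWin {α : Type*} [DecidableEq α] (m : ℕ) (P : ℕ → Finset α) (k : ℕ → ℕ)
    (X : Finset α) : Prop :=
  ∃ i, 1 ≤ i ∧ i ≤ m ∧ k i ≤ (X ∩ cumUnion P i).card

/-! Compare the two threshold sequences level by level, by strong induction. Suppose
`k_j = k'_j` for all `j < i`. The canonical-form inequalities `k_1 ≤ n_1` and
`k_j < k_{j-1} + n_j` let one fill `P_1 ∪ ... ∪ P_i` greedily from the top level down with
exactly `k_i` players so that no lower level `j < i` reaches its threshold `k_j`. This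
coalition wins the `k`-game; in the `k'`-game it can only win at a level `j ≥ i`, which by
monotonicity of `k'` forces `k'_i ≤ k_i`. By symmetry `k_i = k'_i`. -/

section

variable {α : Type*} [DecidableEq α] {m : ℕ} {P : ℕ → Finset α}

lemma cumUnion_mono {i j : ℕ} (h : i ≤ j) : cumUnion P i ⊆ cumUnion P j :=
  Finset.biUnion_subset_biUnion_of_subset_left _ (Finset.Icc_subset_Icc_right h)

lemma cumUnion_add_one (i : ℕ) : cumUnion P (i + 1) = P (i + 1) ∪ cumUnion P i := by
  rw [cumUnion, ← Finset.insert_Icc_right_eq_Icc_add_one (by omega), Finset.biUnion_insert,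
    cumUnion]

lemma disjoint_cumUnion (hdisj : ∀ i j, 1 ≤ i → i < j → j ≤ m → Disjoint (P i) (P j))
    {s t : ℕ} (hst : s < t) (htm : t ≤ m) : Disjoint (cumUnion P s) (P t) := by
  rw [cumUnion, Finset.disjoint_biUnion_left]
  intro j hj
  rw [Finset.mem_Icc] at hj
  exact hdisj j t hj.1 (hj.2.trans_lt hst) htm

variable {k k' : ℕ → ℕ}

lemma exists_subset_cumUnion_card_eq_inter_card_lt
    (hdisj : ∀ i j, 1 ≤ i → i < j → j ≤ m → Disjoint (P i) (P j))
    (hkpos : ∀ i, 1 ≤ i → i ≤ m → 0 < k i) (ha : k 1 ≤ (P 1).card)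
    (hb : ∀ i, 1 < i → i ≤ m → k i < k (i - 1) + (P i).card)
    {t : ℕ} (ht : 1 ≤ t) (htm : t ≤ m) {r : ℕ} (hr : r ≤ k t) :
    ∃ X ⊆ cumUnion P t, X.card = r ∧
      ∀ j, 1 ≤ j → j < t → (X ∩ cumUnion P j).card < k j := by
  induction t, ht using Nat.le_induction generalizing r with
  | base =>
    obtain ⟨X, hXP, hXcard⟩ := Finset.exists_subset_card_eq (hr.trans ha)
    refine ⟨X, hXP.trans ?_, hXcard, by omega⟩
    rw [cumUnion_add_one]
    exact Finset.subset_union_left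
  | succ s hs ih =>
    have hkb : k (s + 1) < k s + (P (s + 1)).card := by simpa using hb (s + 1) (by omega) htm
    -- take as many players as possible from the new top level `P (s + 1)`
    obtain ⟨Y, hYP, hYcard⟩ :=
      Finset.exists_subset_card_eq (min_le_right r (P (s + 1)).card)
    have hrest : r - min r (P (s + 1)).card < k s := by
      have := hkpos s hs (by omega)
      omega
    obtain ⟨X, hXsub, hXcard, hXlow⟩ := ih (by omega) hrest.le
    have hYlow : ∀ j, j ≤ s → Disjoint (cumUnion P j) Y := fun j hj =>
      (disjoint_cumUnion hdisj (Nat.lt_succ_of_le hj) htm).mono_right hYP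
    refine ⟨Y ∪ X, ?_, ?_, fun j hj1 hjs => ?_⟩
    · rw [cumUnion_add_one]
      exact Finset.union_subset_union hYP hXsub
    · rw [Finset.card_union_of_disjoint ((hYlow s le_rfl).symm.mono_right hXsub), hXcard,
        hYcard]
      omega
    · rw [Finset.union_inter_distrib_right,
        Finset.disjoint_iff_inter_eq_empty.1 (hYlow j (by omega)).symm, Finset.empty_union]
      rcases (Nat.lt_succ_iff.1 hjs).lt_or_eq with hjs | rfl
      · exact hXlow j hj1 hjs
      · rwa [Finset.inter_eq_left.2 hXsub, hXcard]

lemma le_of_disjWin_imp (hdisj : ∀ i j, 1 ≤ i → i < j → j ≤ m → Disjoint (P i) (P j))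
    (hkpos : ∀ i, 1 ≤ i → i ≤ m → 0 < k i) (ha : k 1 ≤ (P 1).card)
    (hb : ∀ i, 1 < i → i ≤ m → k i < k (i - 1) + (P i).card)
    (hkmono' : ∀ i j, 1 ≤ i → i < j → j ≤ m → k' i < k' j)
    (himp : ∀ X, disjWin m P k X → disjWin m P k' X)
    {i : ℕ} (hi : 1 ≤ i) (him : i ≤ m) (hlow : ∀ j, 1 ≤ j → j < i → k j ≤ k' j) :
    k' i ≤ k i := by
  obtain ⟨X, hXsub, hXcard, hXlow⟩ :=
    exists_subset_cumUnion_card_eq_inter_card_lt hdisj hkpos ha hb hi him le_rfl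
  have hX : ∀ j, i ≤ j → (X ∩ cumUnion P j).card = k i := fun j hij => by
    rw [Finset.inter_eq_left.2 (hXsub.trans (cumUnion_mono hij)), hXcard]
  obtain ⟨j, hj1, hjm, hjwin⟩ := himp X ⟨i, hi, him, (hX i le_rfl).ge⟩
  rcases lt_trichotomy j i with hji | rfl | hij
  · exact absurd (hXlow j hj1 hji) (not_lt.2 ((hlow j hj1 hji).trans hjwin))
  · exact hjwin.trans (hX j le_rfl).le
  · exact (hkmono' i j hi hij hjm).le.trans (hjwin.trans (hX j hij.le).le)

end

theorem stmt_7_general {α : Type*} [DecidableEq α]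
    (m : ℕ) (P : ℕ → Finset α) (k k' : ℕ → ℕ)
    (hdisj : ∀ i j, 1 ≤ i → i < j → j ≤ m → Disjoint (P i) (P j))
    (hkpos : ∀ i, 1 ≤ i → i ≤ m → 0 < k i)
    (hkmono : ∀ i j, 1 ≤ i → i < j → j ≤ m → k i < k j)
    (ha : k 1 ≤ (P 1).card)
    (hb : ∀ i, 1 < i → i ≤ m → k i < k (i - 1) + (P i).card)
    (hkpos' : ∀ i, 1 ≤ i → i ≤ m → 0 < k' i)
    (hkmono' : ∀ i j, 1 ≤ i → i < j → j ≤ m → k' i < k' j)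
    (ha' : k' 1 ≤ (P 1).card)
    (hb' : ∀ i, 1 < i → i ≤ m → k' i < k' (i - 1) + (P i).card)
    (hsame : ∀ X : Finset α, disjWin m P k X ↔ disjWin m P k' X) :
    ∀ i, 1 ≤ i → i ≤ m → k i = k' i := by
  intro i
  induction i using Nat.strong_induction_on with
  | _ i ih =>
    intro hi him
    have hlow : ∀ j, 1 ≤ j → j < i → k j = k' j := fun j hj hji =>
      ih j hji hj (hji.le.trans him)
    exact le_antisymm
      (le_of_disjWin_imp hdisj hkpos' ha' hb' hkmono (fun X => (hsame X).2) hi him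
        fun j hj hji => (hlow j hj hji).ge)
      (le_of_disjWin_imp hdisj hkpos ha hb hkmono' (fun X => (hsame X).1) hi him
        fun j hj hji => (hlow j hj hji).le)

/-- the thresholds of a canonically represented disjunctive
hierarchical game are unique: two disjunctive hierarchical games on the same
partition `P = P_1 ∪ ... ∪ P_m` with threshold sequences `k`, `k'` both
satisfying `k_1 ≤ n_1` and `k_i < k_{i-1} + n_i` for `1 < i < m` as well as
`k_m < k_{m-1} + n_m` (here stated uniformly for `1 < i ≤ m`), which have the
same winning coalitions, have equal thresholds. -/
theorem stmt_7 {α : Type*} [Fintype α] [DecidableEq α]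
    (m : ℕ) (hm : 1 ≤ m) (P : ℕ → Finset α) (k k' : ℕ → ℕ)
    (hdisj : ∀ i j, 1 ≤ i → i < j → j ≤ m → Disjoint (P i) (P j))
    (hlvlne : ∀ i, 1 ≤ i → i ≤ m → (P i).Nonempty)
    (hcover : ∀ a : α, ∃ i, 1 ≤ i ∧ i ≤ m ∧ a ∈ P i)
    (hkpos : ∀ i, 1 ≤ i → i ≤ m → 0 < k i)
    (hkmono : ∀ i j, 1 ≤ i → i < j → j ≤ m → k i < k j)
    (ha : k 1 ≤ (P 1).card)
    (hb : ∀ i, 1 < i → i ≤ m → k i < k (i - 1) + (P i).card)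
    (hkpos' : ∀ i, 1 ≤ i → i ≤ m → 0 < k' i)
    (hkmono' : ∀ i j, 1 ≤ i → i < j → j ≤ m → k' i < k' j)
    (ha' : k' 1 ≤ (P 1).card)
    (hb' : ∀ i, 1 < i → i ≤ m → k' i < k' (i - 1) + (P i).card)
    (hsame : ∀ X : Finset α, disjWin m P k X ↔ disjWin m P k' X) :
    ∀ i, 1 ≤ i → i ≤ m → k i = k' i :=
  stmt_7_general m P k k' hdisj hkpos hkmono ha hb hkpos' hkmono' ha' hb' hsame
end

section
/- Every complete simple game on a multiset with a unique shift-maximal losing coalition is a canonical disjunctive hierarchical game: if G is a complete simple game on the multiset P̄={1^{n_1},...,m^{n_m}} with 1 ≻_G 2 ≻_G ... ≻_G m in Isbel's desirability order, and G has exactly one shift-maximal losing submultiset, then there exist positive integers k_1<k_2<...<k_m such that G = H_∃(n,k). -/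
/-!
Compare profiles by their prefix sums `l 1 + ⋯ + l t`. If `a` is dominated by `b` in every
prefix sum, then `b` can be turned into `a` by removing copies and shifting copies to less
desirable levels; both moves keep a losing profile losing (monotonicity, and `i ≽ j` for `i < j`),
so everything dominated by a losing profile loses. Conversely, adding copies and undoing shifts
strictly raises the prefix sums, so every losing profile is dominated by a shift-maximal losing
one. With `Y` the unique shift-maximal losing profile, `l` therefore wins iff some prefix sum of
`l` exceeds that of `Y`, which is `H_∃(n, k)` for `k i = Y 1 + ⋯ + Y i + 1`. Finally
`i + 1 ⋡ i` produces a profile whose two one-copy extensions straddle `Y`, which forces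
`Y (i + 1) > 0`, so `k` is strictly increasing.
-/

/-- A valid profile (submultiset of `P̄ = {1^{n_1}, ..., m^{n_m}}`). -/
def validProfile (m : ℕ) (n : ℕ → ℕ) (l : ℕ → ℕ) : Prop :=
  (∀ j, 1 ≤ j → j ≤ m → l j ≤ n j) ∧ ∀ j, (j = 0 ∨ m < j) → l j = 0

/-- Winning predicate of the canonical disjunctive hierarchical game `H_∃(n,k)`. -/
def mWin (m : ℕ) (k : ℕ → ℕ) (l : ℕ → ℕ) : Prop :=
  ∃ i, 1 ≤ i ∧ i ≤ m ∧ k i ≤ ∑ j ∈ Finset.Icc 1 i, l j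

/-- The profile `l` with one extra copy of level `i`. -/
def addOne (l : ℕ → ℕ) (i : ℕ) : ℕ → ℕ :=
  fun j => if j = i then l i + 1 else l j

/-- Isbel's desirability relation on levels: `i ≽ j` iff for every submultiset
`X` with the multiplicities of `i` and `j` below capacity, `X` plus one copy of
`j` winning implies `X` plus one copy of `i` winning. -/
def levelGE (m : ℕ) (n : ℕ → ℕ) (W : (ℕ → ℕ) → Prop) (i j : ℕ) : Prop :=
  ∀ l, validProfile m n l → l i < n i → l j < n j → W (addOne l j) → W (addOne l i)

/-- The profile obtained from `A` by a shift moving one copy of level `i` to a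
(lower) level `j`. -/
def shifted (A : ℕ → ℕ) (i j : ℕ) : ℕ → ℕ :=
  fun l => if l = i then A i - 1 else if l = j then A j + 1 else A l

/-- A shift-maximal losing submultiset of the game `W`. -/
def shiftMaxLosing (m : ℕ) (n : ℕ → ℕ) (W : (ℕ → ℕ) → Prop) (Y : ℕ → ℕ) : Prop :=
  validProfile m n Y ∧ ¬ W Y ∧
    (∀ Z, validProfile m n Z → (∀ j, Y j ≤ Z j) → Y ≠ Z → W Z) ∧
    ¬ ∃ A i j, validProfile m n A ∧ ¬ W A ∧ 1 ≤ i ∧ i < j ∧ j ≤ m ∧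
        1 ≤ A i ∧ A j < n j ∧ Y = shifted A i j

open Finset

def prefixSum (l : ℕ → ℕ) (t : ℕ) : ℕ := ∑ j ∈ Icc 1 t, l j

def PrefixLE (m : ℕ) (a b : ℕ → ℕ) : Prop := ∀ t ≤ m, prefixSum a t ≤ prefixSum b t

def PrefixLT (m : ℕ) (a b : ℕ → ℕ) : Prop :=
  PrefixLE m a b ∧ ∃ t ≤ m, prefixSum a t < prefixSum b t

def prefixRank (m : ℕ) (l : ℕ → ℕ) : ℕ := ∑ t ∈ range (m + 1), prefixSum l t

section PrefixSum

variable {a b : ℕ → ℕ} {m : ℕ}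

@[simp] lemma prefixSum_zero (l : ℕ → ℕ) : prefixSum l 0 = 0 := by simp [prefixSum]

lemma prefixSum_succ (l : ℕ → ℕ) (t : ℕ) : prefixSum l (t + 1) = prefixSum l t + l (t + 1) :=
  sum_Icc_succ_top (by omega) l

lemma prefixSum_mono (l : ℕ → ℕ) {s t : ℕ} (h : s ≤ t) : prefixSum l s ≤ prefixSum l t :=
  sum_le_sum_of_subset (Icc_subset_Icc le_rfl h)

lemma prefixSum_le_prefixSum (h : ∀ j, a j ≤ b j) (t : ℕ) : prefixSum a t ≤ prefixSum b t :=
  sum_le_sum fun j _ => h j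

lemma prefixSum_add_single (l : ℕ → ℕ) (c t : ℕ) :
    prefixSum (l + Pi.single c 1) t = prefixSum l t + if 1 ≤ c ∧ c ≤ t then 1 else 0 := by
  simp [prefixSum, sum_add_distrib, sum_pi_single']

lemma PrefixLE.refl (m : ℕ) (l : ℕ → ℕ) : PrefixLE m l l := fun _ _ => le_rfl

lemma PrefixLE.trans {c : ℕ → ℕ} (hab : PrefixLE m a b) (hbc : PrefixLE m b c) :
    PrefixLE m a c := fun t ht => (hab t ht).trans (hbc t ht)

lemma PrefixLE.prefixRank_le (h : PrefixLE m a b) : prefixRank m a ≤ prefixRank m b :=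
  sum_le_sum fun t ht => h t (by simpa [Nat.lt_succ_iff] using ht)

lemma PrefixLT.prefixRank_lt (h : PrefixLT m a b) : prefixRank m a < prefixRank m b := by
  obtain ⟨hle, t, ht, hlt⟩ := h
  exact sum_lt_sum (fun s hs => hle s (by simpa [Nat.lt_succ_iff] using hs))
    ⟨t, by simpa [Nat.lt_succ_iff] using ht, hlt⟩

end PrefixSum

section Profiles

variable {m : ℕ} {n l a b A : ℕ → ℕ} {i j c : ℕ}

lemma addOne_eq_add_single (l : ℕ → ℕ) (c : ℕ) : addOne l c = l + Pi.single c 1 := by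
  funext u
  simp only [addOne, Pi.add_apply, Pi.single_apply]
  split_ifs <;> simp_all

lemma update_pred_add_single (h : 1 ≤ A i) :
    Function.update A i (A i - 1) + Pi.single i 1 = A := by
  funext u
  simp only [Pi.add_apply, Pi.single_apply, Function.update_apply]
  split_ifs <;> simp_all

lemma shifted_add_single (hij : i ≠ j) (h : 1 ≤ A i) :
    shifted A i j + Pi.single i 1 = A + Pi.single j 1 := by
  funext u
  simp only [shifted, Pi.add_apply, Pi.single_apply]
  split_ifs <;> simp_all

lemma prefixSum_addOne (l : ℕ → ℕ) (c t : ℕ) :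
    prefixSum (addOne l c) t = prefixSum l t + if 1 ≤ c ∧ c ≤ t then 1 else 0 := by
  rw [addOne_eq_add_single, prefixSum_add_single]

lemma update_pred_le (A : ℕ → ℕ) (i u : ℕ) : Function.update A i (A i - 1) u ≤ A u := by
  rw [Function.update_apply]
  split_ifs with hu
  · subst hu; omega
  · rfl

lemma addOne_update_pred_self (h : 1 ≤ A i) : addOne (Function.update A i (A i - 1)) i = A := by
  rw [addOne_eq_add_single, update_pred_add_single h]

lemma addOne_update_pred (hij : i ≠ j) :
    addOne (Function.update A i (A i - 1)) j = shifted A i j := by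
  funext u
  simp only [addOne, shifted, Function.update_apply]
  split_ifs <;> simp_all

lemma prefixSum_update_pred (hi : 1 ≤ i) (h : 1 ≤ A i) (t : ℕ) :
    prefixSum (Function.update A i (A i - 1)) t + (if i ≤ t then 1 else 0) = prefixSum A t := by
  have := congrArg (prefixSum · t) (update_pred_add_single h)
  simp only [prefixSum_add_single] at this
  split_ifs at this ⊢ <;> omega

lemma prefixSum_shifted (hi : 1 ≤ i) (hij : i < j) (h : 1 ≤ A i) (t : ℕ) :
    prefixSum (shifted A i j) t + (if i ≤ t ∧ t < j then 1 else 0) = prefixSum A t := by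
  have := congrArg (prefixSum · t) (shifted_add_single hij.ne h)
  simp only [prefixSum_add_single] at this
  split_ifs at this ⊢ <;> omega

lemma prefixLT_shifted (hi : 1 ≤ i) (hij : i < j) (him : i ≤ m) (h : 1 ≤ A i) :
    PrefixLT m (shifted A i j) A := by
  have := prefixSum_shifted hi hij h
  exact ⟨fun t _ => by grind, i, him, by grind⟩

lemma validProfile.of_le (hA : validProfile m n A) (h : ∀ u, l u ≤ A u) :
    validProfile m n l :=
  ⟨fun u h1 h2 => (h u).trans (hA.1 u h1 h2), fun u hu => by simpa [hA.2 u hu] using h u⟩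

lemma validProfile.addOne (hl : validProfile m n l) (h1 : 1 ≤ c) (h2 : c ≤ m) (h3 : l c < n c) :
    validProfile m n (addOne l c) := by
  refine ⟨fun u hu1 hu2 => ?_, fun u hu => ?_⟩ <;> unfold _root_.addOne <;> split_ifs
  all_goals grind [validProfile]

lemma validProfile.shifted (hA : validProfile m n A) (hj1 : 1 ≤ j) (hjm : j ≤ m)
    (h : A j < n j) : validProfile m n (shifted A i j) := by
  refine ⟨fun u hu1 hu2 => ?_, fun u hu => ?_⟩ <;> unfold _root_.shifted <;> split_ifs
  all_goals grind [validProfile]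

lemma validProfile.prefixLE (hl : validProfile m n l) : PrefixLE m l n := fun _ ht =>
  sum_le_sum fun u hu => hl.1 u (mem_Icc.1 hu).1 ((mem_Icc.1 hu).2.trans ht)

lemma validProfile.eq_of_prefixSum_eq (ha : validProfile m n a) (hb : validProfile m n b)
    (h : ∀ t ≤ m, prefixSum a t = prefixSum b t) : a = b := by
  funext u
  rcases Nat.lt_or_ge m u with hu | hu
  · rw [ha.2 u (Or.inr hu), hb.2 u (Or.inr hu)]
  rcases u with _ | v
  · rw [ha.2 0 (Or.inl rfl), hb.2 0 (Or.inl rfl)]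
  have := h (v + 1) hu
  rw [prefixSum_succ, prefixSum_succ, h v (by omega)] at this
  omega

lemma validProfile.prefixLT_of_le_of_ne (ha : validProfile m n a) (hb : validProfile m n b)
    (hle : ∀ u, a u ≤ b u) (hne : a ≠ b) : PrefixLT m a b := by
  refine ⟨fun t _ => prefixSum_le_prefixSum hle t, m, le_rfl, ?_⟩
  obtain ⟨u, hu⟩ : ∃ u, a u < b u := by
    by_contra! h
    exact hne (funext fun u => (hle u).antisymm (h u))
  have hum : u ∈ Icc 1 m := by
    by_contra h
    have : u = 0 ∨ m < u := by grind
    rw [ha.2 u this, hb.2 u this] at hu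
    exact lt_irrefl 0 hu
  exact sum_lt_sum (fun v _ => hle v) ⟨u, hum, hu⟩

end Profiles

section Step

variable {m : ℕ} {n a b Z : ℕ → ℕ} {i j : ℕ}

lemma prefixLE_prefixLT_of_prefixSum_add (hab : PrefixLE m a b) (him : i ≤ m) (hij : i < j)
    (hlt : ∀ t, i ≤ t → t < j → t ≤ m → prefixSum a t < prefixSum b t)
    (hZ : ∀ t ≤ m, prefixSum Z t + (if i ≤ t ∧ t < j then 1 else 0) = prefixSum b t) :
    PrefixLE m a Z ∧ PrefixLT m Z b := by
  refine ⟨fun t ht => ?_, fun t ht => ?_, i, him, ?_⟩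
  · have := hab t ht; have := hZ t ht; have := hlt t
    split_ifs at * <;> omega
  · have := hZ t ht; omega
  · have := hZ i him; have := hlt i le_rfl
    split_ifs at * <;> omega

/-- At the first level where the prefix sums of `a` and `b` differ, `b` gives up a copy, which
moves to the next level where they agree again, or is dropped if there is none. -/
lemma PrefixLT.exists_removal_or_shift (ha : validProfile m n a) (hb : validProfile m n b)
    (h : PrefixLT m a b) :
    ∃ Z, validProfile m n Z ∧ PrefixLE m a Z ∧ PrefixLT m Z b ∧
      ((∀ u, Z u ≤ b u) ∨
        ∃ i j, 1 ≤ i ∧ i < j ∧ j ≤ m ∧ 1 ≤ b i ∧ b j < n j ∧ Z = shifted b i j) := by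
  classical
  obtain ⟨hab, hex⟩ := h
  set i := Nat.find hex
  obtain ⟨him, hi⟩ : i ≤ m ∧ prefixSum a i < prefixSum b i := Nat.find_spec hex
  have hi1 : 1 ≤ i := Nat.one_le_iff_ne_zero.2 fun h0 => by simp [h0] at hi
  have hbi : 1 ≤ b i := by
    have hprev : prefixSum a (i - 1) = prefixSum b (i - 1) :=
      (hab _ (by omega)).antisymm (not_lt.1 fun h => Nat.find_min hex (by omega) ⟨by omega, h⟩)
    have := prefixSum_succ a (i - 1); have := prefixSum_succ b (i - 1)
    rw [Nat.sub_add_cancel hi1] at *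
    omega
  by_cases hmeet : ∃ j, i < j ∧ j ≤ m ∧ prefixSum a j = prefixSum b j
  · set j := Nat.find hmeet
    obtain ⟨hij, hjm, hj⟩ : i < j ∧ j ≤ m ∧ prefixSum a j = prefixSum b j := Nat.find_spec hmeet
    have hlt : ∀ t, i ≤ t → t < j → t ≤ m → prefixSum a t < prefixSum b t := by
      intro t hit htj htm
      rcases hit.eq_or_lt with rfl | hit
      · exact hi
      · exact (hab t htm).lt_of_ne fun h => Nat.find_min hmeet htj ⟨hit, htm, h⟩
    have hbj : b j < n j := by
      have := hlt (j - 1) (by omega) (by omega) (by omega)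
      have := prefixSum_succ a (j - 1); have := prefixSum_succ b (j - 1)
      have := ha.1 j (by omega) hjm
      rw [Nat.sub_add_cancel (by omega : 1 ≤ j)] at *
      omega
    obtain ⟨haZ, hZb⟩ := prefixLE_prefixLT_of_prefixSum_add hab him hij hlt
      fun t _ => prefixSum_shifted hi1 hij hbi t
    exact ⟨_, hb.shifted (by omega) hjm hbj, haZ, hZb, Or.inr ⟨i, j, hi1, hij, hjm, hbi, hbj, rfl⟩⟩
  · push Not at hmeet
    have hlt : ∀ t, i ≤ t → t < m + 1 → t ≤ m → prefixSum a t < prefixSum b t := by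
      intro t hit _ htm
      rcases hit.eq_or_lt with rfl | hit
      · exact hi
      · exact (hab t htm).lt_of_ne (hmeet t hit htm)
    obtain ⟨haZ, hZb⟩ := prefixLE_prefixLT_of_prefixSum_add hab him (Nat.lt_succ_of_le him) hlt
      fun t ht => by have := prefixSum_update_pred hi1 hbi t; split_ifs at * <;> omega
    exact ⟨_, hb.of_le (update_pred_le b i), haZ, hZb, Or.inl (update_pred_le b i)⟩

end Step

section Game

variable {m : ℕ} {n l A Y : ℕ → ℕ} {W : (ℕ → ℕ) → Prop} {i j : ℕ}

lemma not_win_shifted (hdesir : levelGE m n W i j) (hA : validProfile m n A) (hAW : ¬ W A)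
    (hi1 : 1 ≤ i) (him : i ≤ m) (hij : i ≠ j) (hAi : 1 ≤ A i) (hAj : A j < n j) :
    ¬ W (shifted A i j) := by
  intro hW
  apply hAW
  rw [← addOne_update_pred_self hAi]
  refine hdesir _ (hA.of_le (update_pred_le A i)) ?_ ?_ (by rwa [addOne_update_pred hij])
  · have := hA.1 i hi1 him
    simp only [Function.update_self]
    omega
  · rwa [Function.update_of_ne hij.symm]

lemma exists_losing_prefixLT_of_not_shiftMaxLosing (hl : validProfile m n l) (hlW : ¬ W l)
    (hmax : ¬ shiftMaxLosing m n W l) : ∃ A, validProfile m n A ∧ ¬ W A ∧ PrefixLT m l A := by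
  by_cases hup : ∀ Z, validProfile m n Z → (∀ j, l j ≤ Z j) → l ≠ Z → W Z
  · obtain ⟨A, i, j, hA, hAW, hi1, hij, hjm, hAi, -, rfl⟩ :=
      not_not.1 fun h => hmax ⟨hl, hlW, hup, h⟩
    exact ⟨A, hA, hAW, prefixLT_shifted hi1 hij (by omega) hAi⟩
  · push Not at hup
    obtain ⟨Z, hZ, hlZ, hne, hZW⟩ := hup
    exact ⟨Z, hZ, hZW, hl.prefixLT_of_le_of_ne hZ hlZ hne⟩

theorem exists_shiftMaxLosing_prefixLE (hl : validProfile m n l) (hlW : ¬ W l) :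
    ∃ Y, shiftMaxLosing m n W Y ∧ PrefixLE m l Y := by
  induction hd : prefixRank m n - prefixRank m l using Nat.strong_induction_on generalizing l with
  | _ d ih =>
  by_cases hmax : shiftMaxLosing m n W l
  · exact ⟨l, hmax, PrefixLE.refl m l⟩
  obtain ⟨A, hA, hAW, hlA⟩ := exists_losing_prefixLT_of_not_shiftMaxLosing hl hlW hmax
  have := hlA.prefixRank_lt
  have := hA.prefixLE.prefixRank_le
  obtain ⟨Y, hY, hAY⟩ := ih _ (by omega) hA hAW rfl
  exact ⟨Y, hY, hlA.1.trans hAY⟩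

theorem not_win_of_prefixLE
    (hmono : ∀ A B, validProfile m n A → validProfile m n B → (∀ j, A j ≤ B j) → W A → W B)
    (hdesir : ∀ i j, 1 ≤ i → i < j → j ≤ m → levelGE m n W i j)
    (hY : validProfile m n Y) (hYW : ¬ W Y) (hl : validProfile m n l) (hlY : PrefixLE m l Y) :
    ¬ W l := by
  induction hd : prefixRank m Y using Nat.strong_induction_on generalizing Y with
  | _ d ih =>
  by_cases heq : ∀ t ≤ m, prefixSum l t = prefixSum Y t
  · rwa [hl.eq_of_prefixSum_eq hY heq]
  push Not at heq
  obtain ⟨t, htm, hne⟩ := heq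
  obtain ⟨Z, hZ, hlZ, hZY, hstep⟩ :=
    PrefixLT.exists_removal_or_shift hl hY ⟨hlY, t, htm, (hlY t htm).lt_of_ne hne⟩
  have hZW : ¬ W Z := by
    rcases hstep with hle | ⟨i, j, hi1, hij, hjm, hYi, hYj, rfl⟩
    · exact fun hW => hYW (hmono Z Y hZ hY hle hW)
    · exact not_win_shifted (hdesir i j hi1 hij hjm) hY hYW hi1 (by omega) hij.ne hYi hYj
  exact ih _ (hd ▸ hZY.prefixRank_lt) hZ hZW hlZ rfl

theorem win_iff_not_prefixLE
    (hmono : ∀ A B, validProfile m n A → validProfile m n B → (∀ j, A j ≤ B j) → W A → W B)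
    (hdesir : ∀ i j, 1 ≤ i → i < j → j ≤ m → levelGE m n W i j)
    (hY : shiftMaxLosing m n W Y) (huniq : ∀ Z, shiftMaxLosing m n W Z → Z = Y)
    (hl : validProfile m n l) : W l ↔ ¬ PrefixLE m l Y := by
  refine ⟨fun hW hlY => not_win_of_prefixLE hmono hdesir hY.1 hY.2.1 hl hlY hW, fun h => ?_⟩
  by_contra hW
  obtain ⟨Z, hZ, hlZ⟩ := exists_shiftMaxLosing_prefixLE hl hW
  exact h (huniq Z hZ ▸ hlZ)

lemma prefixSum_lt_prefixSum_succ (hwin : ∀ l, validProfile m n l → (W l ↔ ¬ PrefixLE m l Y))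
    (hi1 : 1 ≤ i) (him : i < m) (hnot : ¬ levelGE m n W (i + 1) i) :
    prefixSum Y i < prefixSum Y (i + 1) := by
  simp only [levelGE, not_forall] at hnot
  obtain ⟨l, hl, hli1, hli, hWi, hWi1⟩ := hnot
  have hlose : PrefixLE m (addOne l (i + 1)) Y :=
    not_not.1 fun h => hWi1 ((hwin _ (hl.addOne (by omega) him hli1)).2 h)
  obtain ⟨t, htm, ht⟩ : ∃ t ≤ m, prefixSum Y t < prefixSum (addOne l i) t := by
    simpa [PrefixLE] using (hwin _ (hl.addOne hi1 him.le hli)).1 hWi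
  have h1 := hlose t htm
  rw [prefixSum_addOne] at ht h1
  obtain rfl : t = i := by split_ifs at ht h1 <;> omega
  have h2 := hlose (t + 1) him
  rw [prefixSum_addOne, if_pos ⟨by omega, le_rfl⟩] at h2
  rw [if_pos ⟨hi1, le_rfl⟩] at ht
  have := prefixSum_mono l (Nat.le_add_right t 1)
  omega

end Game

theorem stmt_15_general (m : ℕ) (n : ℕ → ℕ)
    (W : (ℕ → ℕ) → Prop)
    (hmono : ∀ A B, validProfile m n A → validProfile m n B →
        (∀ j, A j ≤ B j) → W A → W B)
    (hstrict : ∀ i j, 1 ≤ i → i < j → j ≤ m →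
        levelGE m n W i j ∧ ¬ levelGE m n W j i)
    (huniq : ∃! Y, shiftMaxLosing m n W Y) :
    ∃ k : ℕ → ℕ, (∀ i, 1 ≤ i → i ≤ m → 0 < k i) ∧
      (∀ i j, 1 ≤ i → i < j → j ≤ m → k i < k j) ∧
      ∀ l, validProfile m n l → (W l ↔ mWin m k l) := by
  obtain ⟨Y, hY, huniqY⟩ := huniq
  have hwin (l : ℕ → ℕ) (hl : validProfile m n l) : W l ↔ ¬ PrefixLE m l Y :=
    win_iff_not_prefixLE hmono (fun i j hi hij hj => (hstrict i j hi hij hj).1) hY huniqY hl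
  refine ⟨fun i => prefixSum Y i + 1, fun _ _ _ => Nat.succ_pos _, fun i j hi hij hjm => ?_,
    fun l hl => ?_⟩
  · dsimp only
    have := prefixSum_lt_prefixSum_succ hwin hi (by omega)
      (hstrict i (i + 1) hi (by omega) (by omega)).2
    have := prefixSum_mono Y (show i + 1 ≤ j by omega)
    omega
  · simp only [hwin l hl, mWin, PrefixLE, not_forall, not_le]
    constructor
    · rintro ⟨t, htm, ht⟩
      exact ⟨t, Nat.one_le_iff_ne_zero.2 (by rintro rfl; simp at ht), htm, ht⟩
    · rintro ⟨t, -, htm, ht⟩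
      exact ⟨t, htm, ht⟩

/-- every complete simple game on the multiset
`P̄ = {1^{n_1}, ..., m^{n_m}}` with `1 ≻ 2 ≻ ... ≻ m` in Isbel's desirability
order having a unique shift-maximal losing submultiset is a canonical
disjunctive hierarchical game: there exist positive integers `k_1 < ... < k_m`
with `G = H_∃(n, k)`. -/
theorem stmt_15 (m : ℕ) (hm : 1 ≤ m) (n : ℕ → ℕ)
    (hnpos : ∀ i, 1 ≤ i → i ≤ m → 0 < n i)
    (W : (ℕ → ℕ) → Prop)
    (hmono : ∀ A B, validProfile m n A → validProfile m n B →
        (∀ j, A j ≤ B j) → W A → W B)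
    (hstrict : ∀ i j, 1 ≤ i → i < j → j ≤ m →
        levelGE m n W i j ∧ ¬ levelGE m n W j i)
    (huniq : ∃! Y, shiftMaxLosing m n W Y) :
    ∃ k : ℕ → ℕ, (∀ i, 1 ≤ i → i ≤ m → 0 < k i) ∧
      (∀ i j, 1 ≤ i → i < j → j ≤ m → k i < k j) ∧
      ∀ l, validProfile m n l → (W l ↔ mWin m k l) :=
  stmt_15_general m n W hmono hstrict huniq
end
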